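/- arXiv:1704.04549 — 3 statements merged into one kernel-verified Lean document; each statement's English description precedes it below -/
import Mathlib

section
/- Van Loan's rearrangement identity: there exists a rearrangement (shuffle) map R from (m₁m₂)×(n₁n₂) matrices to (m₁n₁)×(m₂n₂) matrices, linear and Frobenius-norm preserving, such that R(A ⊗ B) = vec(A) vec(B)ᵀ for all m₁×n₁ matrices A and m₂×n₂ matrices B. -/
open Matrix
open scoped Kronecker

/-- The Frobenius norm of a real matrix. -/
noncomputable def frob {a b : Type*} [Fintype a] [Fintype b] (M : Matrix a b ℝ) : ℝ :=
  Real.sqrt (∑ i, ∑ j, (M i j) ^ 2)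

namespace Matrix

variable {α β γ δ R : Type*}

/-- Reading `M : Matrix (α × γ) (β × δ) R` as an `α × β` array of `γ × δ` blocks, row `(i, j)`
of `rearrange M` is the block `(i, j)` of `M`, flattened. -/
def rearrange [Semiring R] : Matrix (α × γ) (β × δ) R ≃ₗ[R] Matrix (α × β) (γ × δ) R where
  toFun M := of fun x y => M (x.1, y.1) (x.2, y.2)
  invFun N := of fun i j => N (i.1, j.1) (i.2, j.2)
  map_add' _ _ := rfl
  map_smul' _ _ := rfl
  left_inv _ := rfl
  right_inv _ := rfl

theorem rearrange_kronecker [Semiring R] (A : Matrix α β R) (B : Matrix γ δ R) :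
    rearrange (A ⊗ₖ B) = of fun x y => A x.1 x.2 * B y.1 y.2 :=
  rfl

end Matrix

theorem Fintype.sum_sum_rearrange {α β γ δ M : Type*} [Fintype α] [Fintype β] [Fintype γ]
    [Fintype δ] [AddCommMonoid M] (f : α × γ → β × δ → M) :
    ∑ x : α × β, ∑ y : γ × δ, f (x.1, y.1) (x.2, y.2) = ∑ i, ∑ j, f i j := by
  simp only [Fintype.sum_prod_type]
  exact Finset.sum_congr rfl fun _ _ => Finset.sum_comm

theorem frob_rearrange {α β γ δ : Type*} [Fintype α] [Fintype β] [Fintype γ] [Fintype δ]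
    (M : Matrix (α × γ) (β × δ) ℝ) : frob (rearrange M) = frob M :=
  congrArg Real.sqrt (Fintype.sum_sum_rearrange fun i j => M i j ^ 2)

/-- Van Loan's rearrangement: there is a linear, Frobenius-norm-preserving map `R`
from `(m₁m₂)×(n₁n₂)` matrices to `(m₁n₁)×(m₂n₂)` matrices sending every Kronecker
product `A ⊗ B` to the outer product `vec(A) vec(B)ᵀ`, whose `((i,j),(k,l))` entry
is `A i j * B k l`. -/
theorem vanLoan_rearrangement (m₁ n₁ m₂ n₂ : ℕ) :
    ∃ R : Matrix (Fin m₁ × Fin m₂) (Fin n₁ × Fin n₂) ℝ →ₗ[ℝ]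
          Matrix (Fin m₁ × Fin n₁) (Fin m₂ × Fin n₂) ℝ,
      (∀ M, frob (R M) = frob M) ∧
      (∀ (A : Matrix (Fin m₁) (Fin n₁) ℝ) (B : Matrix (Fin m₂) (Fin n₂) ℝ),
        R (A ⊗ₖ B) = Matrix.of fun x y => A x.1 x.2 * B y.1 y.2) :=
  ⟨rearrange.toLinearMap, frob_rearrange, rearrange_kronecker⟩
end

section
/- A matrix A of size (m₁m₂)×(n₁n₂) can be written as a single Kronecker product A = A₁ ⊗ B₁ if and only if its Van Loan rearrangement R(A) has rank at most one. -/
open Matrix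
open scoped Kronecker

lemma rank_le_one_iff_outer {ι κ : Type*} [Fintype ι] [Fintype κ] [DecidableEq κ]
    (M : Matrix ι κ ℝ) :
    M.rank ≤ 1 ↔ ∃ (u : ι → ℝ) (v : κ → ℝ), ∀ i j, M i j = u i * v j := by
  constructor
  · intro h
    rw [Matrix.rank, finrank_le_one_iff] at h
    obtain ⟨⟨u, hu⟩, hspan⟩ := h
    have key : ∀ j, ∃ c : ℝ, ∀ i, M i j = u i * c := by
      intro j
      obtain ⟨c, hc⟩ := hspan ⟨M.mulVec (Pi.single j 1), LinearMap.mem_range_self _ _⟩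
      refine ⟨c, fun i => ?_⟩
      have h2 : c • u = M.mulVec (Pi.single j 1) := congrArg Subtype.val hc
      have := congrFun h2 i
      rw [Matrix.mulVec_single] at this
      simpa [mul_comm] using this.symm
    choose v hv using key
    exact ⟨u, v, fun i j => hv j i⟩
  · rintro ⟨u, v, h⟩
    have heq : M = Matrix.replicateCol Unit u * Matrix.replicateRow Unit v := by
      ext i j; simp [Matrix.mul_apply, h]
    calc M.rank ≤ (Matrix.replicateCol Unit u).rank := heq ▸ Matrix.rank_mul_le_left _ _
      _ ≤ Fintype.card Unit := Matrix.rank_le_card_width _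
      _ = 1 := by simp

/-- A matrix is a single Kronecker product iff its Van Loan rearrangement has
rank at most one. -/
theorem kronecker_iff_rank_le_one {m₁ n₁ m₂ n₂ : ℕ}
    (R : Matrix (Fin m₁ × Fin m₂) (Fin n₁ × Fin n₂) ℝ →ₗ[ℝ]
         Matrix (Fin m₁ × Fin n₁) (Fin m₂ × Fin n₂) ℝ)
    (hbij : Function.Bijective R)
    (hkron : ∀ (X : Matrix (Fin m₁) (Fin n₁) ℝ) (Y : Matrix (Fin m₂) (Fin n₂) ℝ),
      R (X ⊗ₖ Y) = Matrix.of fun x y => X x.1 x.2 * Y y.1 y.2)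
    (A : Matrix (Fin m₁ × Fin m₂) (Fin n₁ × Fin n₂) ℝ) :
    (∃ (A₁ : Matrix (Fin m₁) (Fin n₁) ℝ) (B₁ : Matrix (Fin m₂) (Fin n₂) ℝ),
        A = A₁ ⊗ₖ B₁) ↔ (R A).rank ≤ 1 := by
  rw [rank_le_one_iff_outer]
  constructor
  · rintro ⟨X, Y, rfl⟩
    rw [hkron]
    exact ⟨fun x => X x.1 x.2, fun y => Y y.1 y.2, fun i j => rfl⟩
  · rintro ⟨u, v, h⟩
    refine ⟨Matrix.of fun a b => u (a, b), Matrix.of fun a b => v (a, b), hbij.1 ?_⟩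
    rw [hkron]
    ext ⟨i1, i2⟩ ⟨j1, j2⟩
    exact h (i1, i2) (j1, j2)
end

section
/- Best rank-r approximation solves the nearest Kronecker product problem: if R(A) = UΣVᵀ is an SVD of the Van Loan rearrangement of A, and A_j, B_j are defined by vec(A_j) = √σ_j u_j and vec(B_j) = √σ_j v_j, then ∑_{j=1}^r A_j ⊗ B_j minimizes ‖A − ∑_{j=1}^r X_j ⊗ Y_j‖_F over all choices of r matrices X_j ∈ ℝ^{m₁×n₁}, Y_j ∈ ℝ^{m₂×n₂}, with minimum value (∑_{j>r} σ_j²)^{1/2}. -/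
/-!
`R` is a linear isometry sending `X ⊗ₖ Y` to the rank-one matrix `vec X (vec Y)ᵀ`, so the
problem is the Eckart–Young approximation of `R A = ∑ σⱼ uⱼ vⱼᵀ` by `r` rank-one terms
`xₖ yₖᵀ`. Let `P` project onto the span `K` of the `yₖ`. Row by row, the error is at least the
distance of the row of `R A` to `K`, which gives the squared error `≥ ∑ σⱼ² (1 - tⱼ)` with
`tⱼ = ‖P vⱼ‖² ∈ [0, 1]` and `∑ tⱼ ≤ dim K ≤ r`. As the `σⱼ` decrease, such weights satisfy
`∑ σⱼ² tⱼ ≤ ∑_{j<r} σⱼ²`, and the truncated SVD attains the resulting bound.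
-/

open Matrix
open scoped Kronecker

open Finset
open scoped RealInnerProductSpace InnerProductSpace

theorem sum_mul_le_sum_lt_of_antitone {N r : ℕ} {w t : Fin N → ℝ} (hw : Antitone w)
    (hw0 : ∀ j, 0 ≤ w j) (ht0 : ∀ j, 0 ≤ t j) (ht1 : ∀ j, t j ≤ 1) (hsum : ∑ j, t j ≤ r) :
    ∑ j, w j * t j ≤ ∑ j : Fin N, if (j : ℕ) < r then w j else 0 := by
  by_cases hr : r < N
  · set ρ := w ⟨r, hr⟩
    have key : ∀ j : Fin N, w j * t j + ρ * (if (j : ℕ) < r then 1 else 0) ≤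
        ρ * t j + if (j : ℕ) < r then w j else 0 := by
      intro j
      split_ifs with hj
      · have : ρ ≤ w j := hw (Fin.mk_le_of_le_val hj.le)
        nlinarith [ht1 j]
      · have : w j ≤ ρ := hw (Fin.le_def.2 (not_lt.1 hj))
        nlinarith [ht0 j]
    have hcount : ∑ j : Fin N, (if (j : ℕ) < r then (1 : ℝ) else 0) = r := by
      rw [sum_boole, Fin.card_filter_val_lt, min_eq_right hr.le]
    have hkey_sum := sum_le_sum fun j (_ : j ∈ univ) => key j
    rw [sum_add_distrib, sum_add_distrib, ← mul_sum, ← mul_sum, hcount] at hkey_sum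
    linarith [mul_le_mul_of_nonneg_left hsum (hw0 ⟨r, hr⟩)]
  · refine sum_le_sum fun j _ => ?_
    rw [if_pos (by omega)]
    exact mul_le_of_le_one_right (hw0 j) (ht1 j)

section
variable {𝕜 E : Type*} [RCLike 𝕜] [NormedAddCommGroup E] [InnerProductSpace 𝕜 E]

theorem norm_sq_sub_norm_sq_starProjection_le (K : Submodule 𝕜 E) [K.HasOrthogonalProjection]
    (a : E) {b : E} (hb : b ∈ K) :
    ‖a‖ ^ 2 - ‖K.starProjection a‖ ^ 2 ≤ ‖a - b‖ ^ 2 := by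
  have hperp := K.sub_starProjection_mem_orthogonal a
  have pythagoras : ∀ y ∈ K, ‖a - K.starProjection a + y‖ ^ 2 =
      ‖a - K.starProjection a‖ ^ 2 + ‖y‖ ^ 2 := fun y hy => by
    simp only [sq]
    exact norm_add_sq_eq_norm_sq_add_norm_sq_of_inner_eq_zero _ _
      (Submodule.inner_left_of_mem_orthogonal hy hperp)
  have h₁ := pythagoras _ (K.starProjection_apply_mem a)
  have h₂ := pythagoras _ (K.sub_mem (K.starProjection_apply_mem a) hb)
  rw [sub_add_cancel] at h₁
  rw [sub_add_sub_cancel] at h₂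
  nlinarith [sq_nonneg ‖K.starProjection a - b‖]

theorem sum_norm_sq_starProjection_le_finrank {ι : Type*} [Fintype ι] (K : Submodule 𝕜 E)
    [FiniteDimensional 𝕜 K] {v : ι → E} (hv : Orthonormal 𝕜 v) :
    ∑ j, ‖K.starProjection (v j)‖ ^ 2 ≤ Module.finrank 𝕜 K := by
  set b := stdOrthonormalBasis 𝕜 K
  calc ∑ j, ‖K.starProjection (v j)‖ ^ 2
      = ∑ j, ∑ i, ‖⟪v j, (b i : E)⟫_𝕜‖ ^ 2 := by
        refine sum_congr rfl fun j _ => ?_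
        rw [K.starProjection_apply, Submodule.norm_coe, ← b.sum_sq_norm_inner_right]
        simp [norm_inner_symm]
    _ = ∑ i, ∑ j, ‖⟪v j, (b i : E)⟫_𝕜‖ ^ 2 := sum_comm
    _ ≤ ∑ _i : Fin (Module.finrank 𝕜 K), 1 := sum_le_sum fun i _ => by
        have hbi : ‖(b i : E)‖ = 1 := (Submodule.norm_coe _).trans (b.orthonormal.1 i)
        simpa [hbi] using hv.sum_inner_products_le (b i : E) (s := univ)
    _ = Module.finrank 𝕜 K := by simp
end

theorem sum_norm_sq_sum_smul {ι κ E : Type*} [Fintype ι] [Fintype κ] [DecidableEq κ]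
    [NormedAddCommGroup E] [InnerProductSpace ℝ E] {u : κ → ι → ℝ}
    (hu : ∀ i j, ∑ p, u i p * u j p = if i = j then 1 else 0) (w : κ → E) :
    ∑ p, ‖∑ j, u j p • w j‖ ^ 2 = ∑ j, ‖w j‖ ^ 2 := by
  calc ∑ p, ‖∑ j, u j p • w j‖ ^ 2 = ∑ p, ∑ i, ∑ j, u i p * u j p * ⟪w i, w j⟫ := by
        simp_rw [← real_inner_self_eq_norm_sq, sum_inner, inner_sum, real_inner_smul_left,
          real_inner_smul_right, mul_assoc]
    _ = ∑ i, ∑ j, (∑ p, u i p * u j p) * ⟪w i, w j⟫ := by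
        simp_rw [sum_mul]
        rw [sum_comm]
        exact sum_congr rfl fun i _ => sum_comm
    _ = ∑ j, ‖w j‖ ^ 2 := by simp [hu]

theorem orthonormal_toLp_iff {ι κ : Type*} [Fintype ι] [DecidableEq κ] {u : κ → ι → ℝ} :
    Orthonormal ℝ (fun j => WithLp.toLp 2 (u j) : κ → EuclideanSpace ℝ ι) ↔
      ∀ i j, ∑ p, u i p * u j p = if i = j then 1 else 0 := by
  simp [orthonormal_iff_ite, PiLp.inner_apply, mul_comm]

theorem sum_tail_sq_le_sum_norm_sq_sub {ι E : Type*} [Fintype ι] [NormedAddCommGroup E]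
    [InnerProductSpace ℝ E] {N r : ℕ} {σ : Fin N → ℝ} (hσ : ∀ j, 0 ≤ σ j) (hσmono : Antitone σ)
    {u : Fin N → ι → ℝ} (hu : ∀ i j, ∑ p, u i p * u j p = if i = j then 1 else 0)
    {v : Fin N → E} (hv : Orthonormal ℝ v) (x : Fin r → ι → ℝ) (y : Fin r → E) :
    (∑ j : Fin N, if r ≤ (j : ℕ) then σ j ^ 2 else 0) ≤
      ∑ p, ‖∑ j, u j p • σ j • v j - ∑ k, x k p • y k‖ ^ 2 := by
  set K := Submodule.span ℝ (Set.range y)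
  have : FiniteDimensional ℝ K := FiniteDimensional.span_of_finite ℝ (Set.finite_range y)
  set t := fun j => ‖K.starProjection (v j)‖ ^ 2
  have hnorm_sq : ∑ p, ‖∑ j, u j p • σ j • v j‖ ^ 2 = ∑ j, σ j ^ 2 := by
    simp [sum_norm_sq_sum_smul hu, norm_smul, hv.1]
  have hproj_sq : ∑ p, ‖K.starProjection (∑ j, u j p • σ j • v j)‖ ^ 2 = ∑ j, σ j ^ 2 * t j := by
    simp [sum_norm_sq_sum_smul hu, norm_smul, mul_pow, t]
  have ht_sum : ∑ j, t j ≤ r := by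
    grw [sum_norm_sq_starProjection_le_finrank K hv]
    have := finrank_range_le_card (R := ℝ) y
    rw [Fintype.card_fin] at this
    exact_mod_cast this
  have ht_le_one : ∀ j, t j ≤ 1 := fun j =>
    pow_le_one₀ (norm_nonneg _) ((K.norm_starProjection_apply_le (v j)).trans_eq (hv.1 j))
  have hky_fan : ∑ j, σ j ^ 2 * t j ≤ ∑ j : Fin N, if (j : ℕ) < r then σ j ^ 2 else 0 :=
    sum_mul_le_sum_lt_of_antitone (fun i j hij => pow_le_pow_left₀ (hσ j) (hσmono hij) 2)
      (fun j => sq_nonneg _) (fun j => sq_nonneg _) ht_le_one ht_sum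
  have hsplit : ∑ j : Fin N, σ j ^ 2 = (∑ j : Fin N, if r ≤ (j : ℕ) then σ j ^ 2 else 0) +
      ∑ j : Fin N, if (j : ℕ) < r then σ j ^ 2 else 0 := by
    rw [← sum_add_distrib]
    exact sum_congr rfl fun j _ => by split_ifs <;> first | omega | ring
  have hdist := fun p => norm_sq_sub_norm_sq_starProjection_le K (∑ j, u j p • σ j • v j)
    (b := ∑ k, x k p • y k)
    (K.sum_mem fun k _ => K.smul_mem _ (Submodule.subset_span (Set.mem_range_self k)))
  have hdist_sum := sum_le_sum fun p (_ : p ∈ univ) => hdist p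
  rw [sum_sub_distrib, hnorm_sq, hproj_sq] at hdist_sum
  linarith

section

variable {m n : Type*} [Fintype m] [Fintype n]

theorem frob_eq_sqrt_sum_norm_sq_row (M : Matrix m n ℝ) :
    frob M = √(∑ i, ‖WithLp.toLp 2 (M i)‖ ^ 2) := by
  simp [frob, EuclideanSpace.real_norm_sq_eq]

theorem frob_sum_smul_vecMulVec {κ : Type*} [Fintype κ] [DecidableEq κ] {u : κ → m → ℝ}
    {v : κ → n → ℝ} (hu : ∀ i j, ∑ p, u i p * u j p = if i = j then 1 else 0)
    (hv : ∀ i j, ∑ q, v i q * v j q = if i = j then 1 else 0) (c : κ → ℝ) :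
    frob (∑ j, c j • vecMulVec (u j) (v j)) = √(∑ j, c j ^ 2) := by
  have hrow : ∀ p, WithLp.toLp 2 ((∑ j, c j • vecMulVec (u j) (v j)) p) =
      ∑ j, u j p • c j • WithLp.toLp 2 (v j) := fun p => by
    ext q
    simp [Matrix.sum_apply, vecMulVec_apply, mul_left_comm]
  rw [frob_eq_sqrt_sum_norm_sq_row]
  simp [hrow, sum_norm_sq_sum_smul hu, norm_smul, (orthonormal_toLp_iff.2 hv).1]

theorem sqrt_sum_tail_sq_le_frob_sub {N r : ℕ} {σ : Fin N → ℝ} (hσ : ∀ j, 0 ≤ σ j)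
    (hσmono : Antitone σ) {u : Fin N → m → ℝ} {v : Fin N → n → ℝ}
    (hu : ∀ i j, ∑ p, u i p * u j p = if i = j then 1 else 0)
    (hv : ∀ i j, ∑ q, v i q * v j q = if i = j then 1 else 0)
    (x : Fin r → m → ℝ) (y : Fin r → n → ℝ) :
    √(∑ j : Fin N, if r ≤ (j : ℕ) then σ j ^ 2 else 0) ≤
      frob (∑ j, σ j • vecMulVec (u j) (v j) - ∑ k, vecMulVec (x k) (y k)) := by
  have hrow : ∀ p, WithLp.toLp 2 ((∑ j, σ j • vecMulVec (u j) (v j) -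
      ∑ k, vecMulVec (x k) (y k)) p) =
      ∑ j, u j p • σ j • WithLp.toLp 2 (v j) - ∑ k, x k p • WithLp.toLp 2 (y k) := fun p => by
    ext q
    simp [Matrix.sum_apply, vecMulVec_apply, mul_left_comm]
  rw [frob_eq_sqrt_sum_norm_sq_row]
  simp only [hrow]
  exact Real.sqrt_le_sqrt (sum_tail_sq_le_sum_norm_sq_sub hσ hσmono hu
    (orthonormal_toLp_iff.2 hv) x _)

end

/-- Best rank-`r` truncation of the SVD of the Van Loan rearrangement solves the
nearest Kronecker product problem: if `R A = ∑ⱼ σⱼ uⱼ vⱼᵀ` is an SVD of the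
rearrangement of `A`, and `vec Aⱼ = √σⱼ uⱼ`, `vec Bⱼ = √σⱼ vⱼ`, then the `r`-term
sum `∑_{j<r} Aⱼ ⊗ₖ Bⱼ` minimizes `‖A − ∑ Xⱼ ⊗ₖ Yⱼ‖_F` over all `r`-term Kronecker
sums, with minimum value `√(∑_{j≥r} σⱼ²)`. -/
theorem ksvd_best_approximation {m₁ n₁ m₂ n₂ N : ℕ}
    (R : Matrix (Fin m₁ × Fin m₂) (Fin n₁ × Fin n₂) ℝ →ₗ[ℝ]
         Matrix (Fin m₁ × Fin n₁) (Fin m₂ × Fin n₂) ℝ)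
    (hiso : ∀ M, frob (R M) = frob M)
    (hkron : ∀ (X : Matrix (Fin m₁) (Fin n₁) ℝ) (Y : Matrix (Fin m₂) (Fin n₂) ℝ),
      R (X ⊗ₖ Y) = Matrix.of fun x y => X x.1 x.2 * Y y.1 y.2)
    (A : Matrix (Fin m₁ × Fin m₂) (Fin n₁ × Fin n₂) ℝ)
    (σ : Fin N → ℝ) (u : Fin N → Fin m₁ × Fin n₁ → ℝ) (v : Fin N → Fin m₂ × Fin n₂ → ℝ)
    (hσ : ∀ j, 0 ≤ σ j)
    (hu : ∀ i j, ∑ x, u i x * u j x = if i = j then 1 else 0)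
    (hv : ∀ i j, ∑ x, v i x * v j x = if i = j then 1 else 0)
    (hσmono : ∀ i j : Fin N, i ≤ j → σ j ≤ σ i)
    (hsvd : R A = ∑ j, σ j • Matrix.of fun x y => u j x * v j y)
    (r : ℕ)
    (As : Fin N → Matrix (Fin m₁) (Fin n₁) ℝ) (Bs : Fin N → Matrix (Fin m₂) (Fin n₂) ℝ)
    (hAs : ∀ (j : Fin N) (x : Fin m₁ × Fin n₁), As j x.1 x.2 = Real.sqrt (σ j) * u j x)
    (hBs : ∀ (j : Fin N) (y : Fin m₂ × Fin n₂), Bs j y.1 y.2 = Real.sqrt (σ j) * v j y) :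
    frob (A - ∑ j : Fin N, if (j : ℕ) < r then (As j) ⊗ₖ (Bs j) else 0) =
        Real.sqrt (∑ j : Fin N, if r ≤ (j : ℕ) then σ j ^ 2 else 0) ∧
    ∀ (Xs : Fin r → Matrix (Fin m₁) (Fin n₁) ℝ) (Ys : Fin r → Matrix (Fin m₂) (Fin n₂) ℝ),
      frob (A - ∑ j : Fin N, if (j : ℕ) < r then (As j) ⊗ₖ (Bs j) else 0) ≤
        frob (A - ∑ j, (Xs j) ⊗ₖ (Ys j)) := by
  have hRA : R A = ∑ j, σ j • vecMulVec (u j) (v j) := hsvd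
  have hRAB : ∀ j, R (As j ⊗ₖ Bs j) = σ j • vecMulVec (u j) (v j) := fun j => by
    ext x y
    rw [hkron, of_apply, hAs, hBs, Matrix.smul_apply, vecMulVec_apply, smul_eq_mul,
      mul_mul_mul_comm, Real.mul_self_sqrt (hσ j)]
  have htrunc : R (A - ∑ j : Fin N, if (j : ℕ) < r then (As j) ⊗ₖ (Bs j) else 0) =
      ∑ j : Fin N, (if r ≤ (j : ℕ) then σ j else 0) • vecMulVec (u j) (v j) := by
    rw [map_sub, map_sum, hRA, ← sum_sub_distrib]
    refine sum_congr rfl fun j _ => ?_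
    split_ifs <;> first | omega | simp [hRAB]
  have hbest : frob (A - ∑ j : Fin N, if (j : ℕ) < r then (As j) ⊗ₖ (Bs j) else 0) =
      √(∑ j : Fin N, if r ≤ (j : ℕ) then σ j ^ 2 else 0) := by
    rw [← hiso, htrunc, frob_sum_smul_vecMulVec hu hv]
    simp only [ite_pow, zero_pow two_ne_zero]
  refine ⟨hbest, fun Xs Ys => ?_⟩
  rw [hbest, ← hiso, map_sub, map_sum, hRA]
  simp only [hkron]
  exact sqrt_sum_tail_sq_le_frob_sub hσ hσmono hu hv _ _
end
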